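/- arXiv:2107.00109 — 3 statements merged into one kernel-verified Lean document; each statement's English description precedes it below -/
import Mathlib

section
/- For all x, u ∈ ℝ, the capped least squares loss satisfies the pointwise lower bound: ℓ_τ(x+u) − ℓ_τ(x) − (u²/2)·1(|x| ≤ τ) ≥ −(x²/2)·1(τ−|u| ≤ |x| ≤ τ) − (τ²/2)·1(τ ≤ |x| ≤ τ+|u|) − (u²/2)·1(τ−|u| ≤ |x| ≤ τ) + u·x·1(|x+u| ≤ τ). -/
noncomputable def cls (τ x : ℝ) : ℝ := if |x| ≤ τ then x^2/2 else τ^2/2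

open Classical in
noncomputable def ind (p : Prop) : ℝ := if p then 1 else 0

lemma ind_nonneg (p : Prop) : 0 ≤ ind p := by
  unfold ind; split <;> norm_num

lemma ind_pos {p : Prop} (h : p) : ind p = 1 := by simp [ind, h]

lemma ind_neg {p : Prop} (h : ¬p) : ind p = 0 := by simp [ind, h]

lemma cls_pos {τ x : ℝ} (h : |x| ≤ τ) : cls τ x = x^2/2 := by simp [cls, h]

lemma cls_neg {τ x : ℝ} (h : ¬|x| ≤ τ) : cls τ x = τ^2/2 := by simp [cls, h]

theorem stmt_3 (τ : ℝ) (hτ : 0 < τ) (x u : ℝ) :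
    cls τ (x + u) - cls τ x - (u^2/2) * ind (|x| ≤ τ) ≥
      -(x^2/2) * ind (τ - |u| ≤ |x| ∧ |x| ≤ τ)
      - (τ^2/2) * ind (τ ≤ |x| ∧ |x| ≤ τ + |u|)
      - (u^2/2) * ind (τ - |u| ≤ |x| ∧ |x| ≤ τ)
      + u * x * ind (|x + u| ≤ τ) := by
  have h1 : |x + u| ≤ |x| + |u| := abs_add_le x u
  have h2 : |x| - |u| ≤ |x + u| := by
    have h := abs_add_le (x + u) (-u)
    simp only [add_neg_cancel_right, abs_neg] at h
    linarith
  have iP := ind_nonneg (τ - |u| ≤ |x| ∧ |x| ≤ τ)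
  have iQ := ind_nonneg (τ ≤ |x| ∧ |x| ≤ τ + |u|)
  by_cases hA : |x| ≤ τ <;> by_cases hB : |x + u| ≤ τ
  · -- both inside
    rw [cls_pos hA, cls_pos hB, ind_pos hA, ind_pos hB]
    nlinarith [sq_nonneg x, sq_nonneg u, sq_nonneg τ]
  · -- A, not B
    by_cases hP : τ - |u| ≤ |x|
    · rw [cls_pos hA, cls_neg hB, ind_pos hA, ind_neg hB,
        ind_pos (And.intro hP hA)]
      nlinarith [sq_nonneg τ]
    · exfalso
      push_neg at hP hB
      have : 0 ≤ |u| := abs_nonneg u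
      linarith
  · -- not A, B
    push_neg at hA
    have hQ : τ ≤ |x| ∧ |x| ≤ τ + |u| := ⟨hA.le, by linarith⟩
    have hPn : ¬(τ - |u| ≤ |x| ∧ |x| ≤ τ) := fun h => absurd h.2 (not_le.2 hA)
    rw [cls_pos hB, cls_neg (not_le.2 hA), ind_pos hB, ind_pos hQ,
      ind_neg hPn, ind_neg (not_le.2 hA)]
    nlinarith [sq_nonneg x, sq_nonneg u]
  · -- both outside
    push_neg at hA
    have hPn : ¬(τ - |u| ≤ |x| ∧ |x| ≤ τ) := fun h => absurd h.2 (not_le.2 hA)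
    rw [cls_neg hB, cls_neg (not_le.2 hA), ind_neg hB, ind_neg hPn,
      ind_neg (not_le.2 hA)]
    nlinarith [sq_nonneg τ]
end

section
/- Orthogonal Procrustes solution: for Y ∈ ℝ^{n×p} and S ∈ ℝ^{n×q}, if YᵀS has singular value decomposition L D Rᵀ with L ∈ ℝ^{p×q}, D ∈ ℝ^{q×q} diagonal with nonnegative entries, R ∈ ℝ^{q×q} orthogonal, then W = L Rᵀ minimizes ‖Y − S Uᵀ‖_F² over all U ∈ ℝ^{p×q} with Uᵀ U = I_q. -/
open Matrix

noncomputable def frobSq {m n : Type*} [Fintype m] [Fintype n]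
    (A : Matrix m n ℝ) : ℝ := ∑ i, ∑ j, (A i j) ^ 2

lemma frobSq_eq_trace {m n : Type*} [Fintype m] [Fintype n]
    (A : Matrix m n ℝ) : frobSq A = (Aᵀ * A).trace := by
  simp only [frobSq, Matrix.trace, Matrix.diag, Matrix.mul_apply,
    Matrix.transpose_apply, sq]
  exact Finset.sum_comm

theorem stmt_11 (n p q : ℕ)
    (Y : Matrix (Fin n) (Fin p) ℝ) (S : Matrix (Fin n) (Fin q) ℝ)
    (L : Matrix (Fin p) (Fin q) ℝ) (dvec : Fin q → ℝ)
    (R : Matrix (Fin q) (Fin q) ℝ)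
    (hL : Lᵀ * L = 1) (hd : ∀ i, 0 ≤ dvec i)
    (hR : Rᵀ * R = 1) (hR' : R * Rᵀ = 1)
    (hsvd : Yᵀ * S = L * Matrix.diagonal dvec * Rᵀ) :
    ∀ U : Matrix (Fin p) (Fin q) ℝ, Uᵀ * U = 1 →
      frobSq (Y - S * (L * Rᵀ)ᵀ) ≤ frobSq (Y - S * Uᵀ) := by
  intro U hU
  -- expansion of the objective for any V with orthonormal columns
  have key : ∀ V : Matrix (Fin p) (Fin q) ℝ, Vᵀ * V = 1 →
      frobSq (Y - S * Vᵀ) =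
        (Yᵀ * Y).trace + (Sᵀ * S).trace - 2 * ((Yᵀ * S) * Vᵀ).trace := by
    intro V hV
    rw [frobSq_eq_trace]
    have hexp : (Y - S * Vᵀ)ᵀ * (Y - S * Vᵀ) =
        Yᵀ * Y - Yᵀ * (S * Vᵀ) - V * Sᵀ * Y + V * (Sᵀ * S) * Vᵀ := by
      simp [Matrix.transpose_sub, Matrix.transpose_mul, Matrix.sub_mul,
        Matrix.mul_sub, Matrix.mul_assoc]
      noncomm_ring
    rw [hexp]
    have h1 : (V * (Sᵀ * S) * Vᵀ).trace = (Sᵀ * S).trace := by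
      rw [Matrix.trace_mul_comm, ← Matrix.mul_assoc, hV, Matrix.one_mul]
    have h2 : (V * Sᵀ * Y).trace = ((Yᵀ * S) * Vᵀ).trace := by
      rw [← Matrix.trace_transpose (V * Sᵀ * Y)]
      simp [Matrix.transpose_mul, Matrix.mul_assoc]
    rw [Matrix.trace_add, Matrix.trace_sub, Matrix.trace_sub, h1, h2,
      ← Matrix.mul_assoc]
    ring
  have hW : (L * Rᵀ)ᵀ * (L * Rᵀ) = 1 := by
    rw [Matrix.transpose_mul, Matrix.transpose_transpose,
      show R * Lᵀ * (L * Rᵀ) = R * (Lᵀ * L) * Rᵀ by simp [Matrix.mul_assoc],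
      hL, Matrix.mul_one, hR']
  rw [key U hU, key _ hW]
  have htrace : ((Yᵀ * S) * Uᵀ).trace ≤ ((Yᵀ * S) * (L * Rᵀ)ᵀ).trace := by
    -- RHS equals ∑ dvec i
    have hrhs : ((Yᵀ * S) * (L * Rᵀ)ᵀ).trace = ∑ i, dvec i := by
      rw [hsvd, Matrix.transpose_mul, Matrix.transpose_transpose]
      have : L * Matrix.diagonal dvec * Rᵀ * (R * Lᵀ)
          = L * Matrix.diagonal dvec * Lᵀ := by
        rw [Matrix.mul_assoc (L * Matrix.diagonal dvec), ← Matrix.mul_assoc Rᵀ,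
          hR, Matrix.one_mul]
      rw [this, Matrix.trace_mul_comm, ← Matrix.mul_assoc, hL, Matrix.one_mul,
        Matrix.trace_diagonal]
    -- LHS: trace(D * (Rᵀ Uᵀ L)) = ∑ d i * M i i with M i i ≤ 1
    have hlhs : ((Yᵀ * S) * Uᵀ).trace
        = ∑ i, dvec i * (Rᵀ * Uᵀ * L) i i := by
      rw [hsvd]
      have : L * Matrix.diagonal dvec * Rᵀ * Uᵀ
          = L * (Matrix.diagonal dvec * (Rᵀ * Uᵀ)) := by
        simp [Matrix.mul_assoc]
      rw [this, Matrix.trace_mul_comm,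
        show Matrix.diagonal dvec * (Rᵀ * Uᵀ) * L
            = Matrix.diagonal dvec * (Rᵀ * Uᵀ * L) by simp [Matrix.mul_assoc]]
      simp only [Matrix.trace, Matrix.diag, Matrix.diagonal_mul]
    rw [hrhs, hlhs]
    apply Finset.sum_le_sum
    intro i _
    have hM : (Rᵀ * Uᵀ * L) i i ≤ 1 := by
      set T := U * R with hTdef
      have hTT : Tᵀ * T = 1 := by
        rw [hTdef, Matrix.transpose_mul, Matrix.mul_assoc, ← Matrix.mul_assoc Uᵀ,
          hU, Matrix.one_mul, hR]
      have hM1 : (Rᵀ * Uᵀ * L) i i = ∑ k, T k i * L k i := by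
        rw [show Rᵀ * Uᵀ = Tᵀ from (Matrix.transpose_mul U R).symm]
        simp [Matrix.mul_apply, Matrix.transpose_apply]
      have hTnorm : ∑ k, (T k i) ^ 2 = 1 := by
        have := congrArg (fun A => A i i) hTT
        simpa [Matrix.mul_apply, Matrix.transpose_apply, Matrix.one_apply, sq]
          using this
      have hLnorm : ∑ k, (L k i) ^ 2 = 1 := by
        have := congrArg (fun A => A i i) hL
        simpa [Matrix.mul_apply, Matrix.transpose_apply, Matrix.one_apply, sq]
          using this
      have hcs := Finset.sum_mul_sq_le_sq_mul_sq Finset.univ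
        (fun k => T k i) (fun k => L k i)
      rw [hTnorm, hLnorm, mul_one] at hcs
      rw [hM1]
      nlinarith [hcs]
    calc dvec i * (Rᵀ * Uᵀ * L) i i ≤ dvec i * 1 :=
          mul_le_mul_of_nonneg_left hM (hd i)
      _ = dvec i := mul_one _
  linarith
end

section
/- For identically zero design contribution: a minimizer of the big-M quadratic mixed-integer formulation recovers the capped least squares objective: for any fixed β and each i, min over (tᵢ, zᵢ) with tᵢ ≥ 0, zᵢ ∈ {0,1}, |yᵢ − xᵢᵀβ| ≤ tᵢ + M zᵢ of (tᵢ²/2 + (τ²/2) zᵢ) equals ℓ_τ(yᵢ − xᵢᵀβ), provided M ≥ |yᵢ − xᵢᵀβ| and τ ≤ M. -/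
theorem stmt_15 (τ M r : ℝ) (hτ : 0 < τ) (hM : |r| ≤ M) (hτM : τ ≤ M) :
    IsLeast
      {v : ℝ | ∃ (t : ℝ) (z : Bool), 0 ≤ t ∧
        |r| ≤ t + M * (if z then 1 else 0) ∧
        v = t ^ 2 / 2 + (τ ^ 2 / 2) * (if z then 1 else 0)}
      (cls τ r) := by
  constructor
  · by_cases h : |r| ≤ τ
    · refine ⟨|r|, false, abs_nonneg r, by simp, ?_⟩
      simp [cls, h, sq_abs]
    · refine ⟨0, true, le_refl 0, by simpa using hM, ?_⟩
      simp [cls, h]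
  · rintro v ⟨t, z, ht, hle, rfl⟩
    cases z
    · norm_num at hle ⊢
      have h1 : r ^ 2 ≤ t ^ 2 := by
        have := sq_abs r ▸ pow_le_pow_left₀ (abs_nonneg r) hle 2
        linarith
      unfold cls
      split
      · linarith
      · nlinarith [abs_nonneg r, sq_abs r]
    · norm_num
      unfold cls
      split
      · nlinarith [sq_abs r, abs_nonneg r, sq_nonneg t]
      · nlinarith [sq_nonneg t]
end
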